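/- Let 1 < p < N, q > p−1, let Ω be a bounded domain of ℝ^N with diameter D, let ω be a nonnegative bounded Borel measure on Ω, and let K > 0, b ≥ 0, M > 0, λ > 0. Set β_p = max(1, 3^{(2−p)/(p−1)}). Assume the pointwise inequality W_{1,p}^{2D}[ (W_{1,p}^{2D}[ω])^q · dx ] ≤ M λ^{(q−p+1)/(p−1)²} W_{1,p}^{2D}[ω] < ∞ a.e. in Ω, where (W_{1,p}^{2D}[ω])^q·dx is the measure with density (W_{1,p}^{2D}[ω])^q with respect to Lebesgue measure on Ω. Let {u_m}_{m≥1} be a sequence of nonnegative measurable functions on Ω such that u₁ ≤ K·W_{1,p}^{2D}[ω] + b a.e. in Ω and u_{m+1} ≤ K·W_{1,p}^{2D}[ u_m^q·dx + ω ] + b a.e. in Ω for every m ≥ 1. Then there exist λ₀ > 0 and b₀ > 0, depending only on N, p, q, K, D, M, such that if λ ≤ λ₀ and b ≤ b₀, then u_m ≤ 2 β_p K · W_{1,p}^{2D}[ω] + 2b a.e. in Ω for every m ≥ 1. -/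

import Mathlib

/-!
Write `W = W_{1,p}^{2D}[ω]`, `γ = 1/(p-1)` and `β = β_p`. The bound `u_m ≤ 2βK W + 2b` propagates
by induction: from it, `u_m^q ≤ (4βK)^q W^q + (4b)^q`, so the measure `u_m^q dx + ω` is dominated
by `(4βK)^q W^q dx + (4b)^q dx + ω`. The Wolff potential is monotone in the measure, satisfies
`W[cμ] = c^γ W[μ]`, and is quasi-additive with constant `β` on sums of three measures (the
elementary inequality `(a+b+c)^γ ≤ β (a^γ + b^γ + c^γ)`); Lebesgue measure has a potential bounded
by a constant `C`. Together with the hypothesis on `W[W^q dx]` this gives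
`K W[u_m^q dx + ω] + b ≤ βK ((4βK)^{qγ} M λ^e W + 4^{qγ} C b^{qγ} + W) + b` with
`e = (q-p+1)/(p-1)²`, and because `qγ > 1` and `e > 0` the first two terms are at most `βK W`
and `b` once `λ` and `b` are small.
-/

open MeasureTheory Metric Set
open scoped ENNReal

/-- Truncated Wolff potential `W_{1,p}^R[ω](x) = ∫_0^R (r^{p-N} ω(B(x,r)))^{1/(p-1)} dr/r`. -/
noncomputable def wolffPotential (N : ℕ) (p R : ℝ)
    (ω : Measure (EuclideanSpace ℝ (Fin N))) (x : EuclideanSpace ℝ (Fin N)) : ℝ≥0∞ :=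
  ∫⁻ r in Ioo (0:ℝ) R,
    (ENNReal.ofReal (r ^ (p - (N:ℝ))) * ω (ball x r)) ^ (1/(p-1)) / ENNReal.ofReal r

/-- Maximal fractional operator
`M_{p,R}^η[ω](x) = sup_{0<r<R} ω(B(x,r)) / (r^{N-p} h_η(r))`,
where `h_η(r) = min((−ln r)^{−η}, (ln 2)^{−η})`. -/
noncomputable def maxFracOp (N : ℕ) (p R η : ℝ)
    (ω : Measure (EuclideanSpace ℝ (Fin N))) (x : EuclideanSpace ℝ (Fin N)) : ℝ≥0∞ :=
  ⨆ r ∈ Ioo (0:ℝ) R,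
    ω (ball x r) /
      ENNReal.ofReal (r ^ ((N:ℝ) - p) * min ((-Real.log r) ^ (-η)) ((Real.log 2) ^ (-η)))

namespace ENNReal

lemma rpow_add_le_two_mul_rpow_add_two_mul_rpow {q : ℝ} (hq : 0 ≤ q) (a b : ℝ≥0∞) :
    (a + b) ^ q ≤ (2 * a) ^ q + (2 * b) ^ q := by
  have hmono : Monotone fun x : ℝ≥0∞ => (2 * x) ^ q :=
    fun x y hxy => rpow_le_rpow (mul_le_mul_right hxy 2) hq
  calc (a + b) ^ q ≤ (2 * max a b) ^ q :=
        rpow_le_rpow (by rw [two_mul]; exact add_le_add (le_max_left _ _) (le_max_right _ _)) hq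
    _ = max ((2 * a) ^ q) ((2 * b) ^ q) := hmono.map_max
    _ ≤ _ := max_le le_self_add le_add_self

lemma rpow_add_add_le_mul_rpow_add_rpow_add_rpow {γ : ℝ} (hγ : 0 ≤ γ) (a b c : ℝ≥0∞) :
    (a + b + c) ^ γ ≤ ENNReal.ofReal (max 1 (3 ^ (γ - 1))) * (a ^ γ + b ^ γ + c ^ γ) := by
  rw [ofReal_max, ofReal_one, ← ofReal_rpow_of_pos three_pos, ofReal_ofNat]
  rcases le_total γ 1 with hγ1 | hγ1
  · calc (a + b + c) ^ γ ≤ (a + b) ^ γ + c ^ γ := rpow_add_le_add_rpow _ _ hγ hγ1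
      _ ≤ a ^ γ + b ^ γ + c ^ γ := by gcongr; exact rpow_add_le_add_rpow _ _ hγ hγ1
      _ ≤ _ := le_mul_of_one_le_left zero_le (le_max_left _ _)
  · calc (a + b + c) ^ γ ≤ 3 ^ (γ - 1) * (a ^ γ + b ^ γ + c ^ γ) := by
          simpa [Fin.sum_univ_three, add_assoc] using
            rpow_sum_le_const_mul_sum_rpow (s := Finset.univ) (f := ![a, b, c]) hγ1
      _ ≤ _ := by gcongr; exact le_max_right _ _

lemma exists_pos_forall_mul_ofReal_rpow_le_one {c : ℝ≥0∞} (hc : c ≠ ⊤) {s : ℝ} (hs : 0 < s) :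
    ∃ t : ℝ, 0 < t ∧ ∀ x ≤ t, c * ENNReal.ofReal x ^ s ≤ 1 := by
  have hc1 : c + 1 ≠ 0 := by simp
  have hc1' : c + 1 ≠ ⊤ := by simp [hc]
  set T := (c + 1) ^ (-s⁻¹)
  have hT : T ≠ ⊤ := rpow_ne_top_of_nonneg' (by simp) hc1'
  refine ⟨T.toReal, toReal_pos (by simp [T, hc1']) hT, fun x hx => ?_⟩
  calc c * ENNReal.ofReal x ^ s ≤ (c + 1) * T ^ s := by
        gcongr
        · exact le_self_add
        · exact (ofReal_le_ofReal hx).trans_eq (ofReal_toReal hT)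
    _ = 1 := by
        rw [← rpow_mul, neg_mul, inv_mul_cancel₀ hs.ne', rpow_neg_one,
          ENNReal.mul_inv_cancel hc1 hc1']

lemma exists_pos_forall_mul_ofReal_rpow_le_self {c : ℝ≥0∞} (hc : c ≠ ⊤) {s : ℝ} (hs : 1 < s) :
    ∃ t : ℝ, 0 < t ∧ ∀ x ≤ t, c * ENNReal.ofReal x ^ s ≤ ENNReal.ofReal x := by
  obtain ⟨t, ht, hle⟩ := exists_pos_forall_mul_ofReal_rpow_le_one hc (sub_pos.2 hs)
  refine ⟨t, ht, fun x hx => ?_⟩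
  calc c * ENNReal.ofReal x ^ s = c * ENNReal.ofReal x ^ (s - 1) * ENNReal.ofReal x := by
        nth_rw 1 [← sub_add_cancel s 1]
        rw [rpow_add_of_nonneg _ _ (sub_pos.2 hs).le zero_le_one, rpow_one, mul_assoc]
    _ ≤ ENNReal.ofReal x := mul_le_of_le_one_left zero_le (hle x hx)

end ENNReal

noncomputable def wolffBeta (p : ℝ) : ℝ := max 1 (3 ^ ((2 - p) / (p - 1)))

section WolffPotential

variable {N : ℕ} {p R : ℝ}

local notation "E" => EuclideanSpace ℝ (Fin N)

lemma measurable_wolffPotential_integrand (μ : Measure E) (x : E) :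
    Measurable fun r : ℝ =>
      (ENNReal.ofReal (r ^ (p - N)) * μ (ball x r)) ^ (1 / (p - 1)) / ENNReal.ofReal r := by
  have hball : Monotone fun r : ℝ => μ (ball x r) :=
    fun r s hrs => measure_mono (ball_subset_ball hrs)
  exact (((ENNReal.measurable_ofReal.comp (measurable_id.pow_const _)).mul
    hball.measurable).pow_const _).div (ENNReal.measurable_ofReal.comp measurable_id)

lemma wolffPotential_mono (hp : 1 ≤ p) {μ ν : Measure E} (h : μ ≤ ν) (x : E) :
    wolffPotential N p R μ x ≤ wolffPotential N p R ν x := by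
  have hγ : 0 ≤ 1 / (p - 1) := one_div_nonneg.2 (sub_nonneg.2 hp)
  unfold wolffPotential
  gcongr with r

lemma wolffPotential_smul (hp : 1 ≤ p) {c : ℝ≥0∞} (hc : c ≠ ⊤) (μ : Measure E) (x : E) :
    wolffPotential N p R (c • μ) x = c ^ (1 / (p - 1)) * wolffPotential N p R μ x := by
  have hγ : 0 ≤ 1 / (p - 1) := one_div_nonneg.2 (sub_nonneg.2 hp)
  unfold wolffPotential
  rw [← lintegral_const_mul' _ _ (ENNReal.rpow_ne_top_of_nonneg hγ hc)]
  congr 1 with r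
  rw [Measure.smul_apply, smul_eq_mul, mul_left_comm, ENNReal.mul_rpow_of_nonneg _ _ hγ,
    mul_div_assoc]

lemma wolffPotential_add_add_le (hp : 1 < p) (μ₁ μ₂ μ₃ : Measure E) (x : E) :
    wolffPotential N p R (μ₁ + μ₂ + μ₃) x ≤
      ENNReal.ofReal (wolffBeta p) *
        (wolffPotential N p R μ₁ x + wolffPotential N p R μ₂ x + wolffPotential N p R μ₃ x) := by
  have hγ : 0 ≤ 1 / (p - 1) := one_div_nonneg.2 (sub_nonneg.2 hp.le)
  have hexp : (2 - p) / (p - 1) = 1 / (p - 1) - 1 := by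
    field_simp [(sub_pos.2 hp).ne']
    ring
  unfold wolffPotential
  rw [← lintegral_add_right _ (measurable_wolffPotential_integrand μ₂ x),
    ← lintegral_add_right _ (measurable_wolffPotential_integrand μ₃ x),
    ← lintegral_const_mul' _ _ ENNReal.ofReal_ne_top, wolffBeta, hexp]
  gcongr with r
  simp only [Measure.add_apply, mul_add, ← ENNReal.add_div]
  rw [← mul_div_assoc]
  gcongr
  exact ENNReal.rpow_add_add_le_mul_rpow_add_rpow_add_rpow hγ _ _ _

lemma wolffPotential_volume_eq (x : E) :
    wolffPotential N p R volume x = wolffPotential N p R volume 0 := by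
  simp only [wolffPotential, Measure.addHaar_ball_center volume x]

lemma wolffPotential_volume_lt_top (hp : 1 < p) (x : E) :
    wolffPotential N p R volume x < ⊤ := by
  have hγ : 0 ≤ 1 / (p - 1) := one_div_nonneg.2 (sub_nonneg.2 hp.le)
  set κ := volume (ball (0 : E) 1)
  refine setLIntegral_lt_top_of_le_nnreal measure_Ioo_lt_top.ne
    ⟨(κ ^ (1 / (p - 1)) * ENNReal.ofReal (R ^ (1 / (p - 1)))).toNNReal, fun r hr => ?_⟩
  have hr0 : 0 < r := hr.1
  -- on `(0, R)` the integrand is `κ^γ r^{pγ - 1} = κ^γ r^γ ≤ κ^γ R^γ`, with `γ = 1/(p-1)`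
  have hexp : p * (1 / (p - 1)) - 1 = 1 / (p - 1) := by
    field_simp [(sub_pos.2 hp).ne']
    ring
  rw [ENNReal.coe_toNNReal (ENNReal.mul_ne_top (ENNReal.rpow_ne_top_of_nonneg hγ
      measure_ball_lt_top.ne) ENNReal.ofReal_ne_top),
    Measure.addHaar_ball_of_pos volume x hr0, finrank_euclideanSpace_fin, ← mul_assoc,
    ← ENNReal.ofReal_mul (Real.rpow_nonneg hr0.le _), ← Real.rpow_natCast,
    ← Real.rpow_add hr0, sub_add_cancel, ENNReal.mul_rpow_of_nonneg _ _ hγ,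
    ENNReal.ofReal_rpow_of_nonneg (Real.rpow_nonneg hr0.le _) hγ, ← Real.rpow_mul hr0.le,
    mul_comm, mul_div_assoc, ← ENNReal.ofReal_div_of_pos hr0, ← Real.rpow_sub_one hr0.ne',
    hexp]
  gcongr
  exact hr.2.le

lemma wolffPotential_withDensity_rpow_add_le (hp : 1 < p) {q : ℝ} (hq : 0 ≤ q) {Ω : Set E}
    {ω : Measure E} {v : E → ℝ≥0∞} {a b : ℝ≥0∞} (ha : a ≠ ⊤) (hb : b ≠ ⊤)
    (hv : ∀ᵐ y ∂(volume.restrict Ω), v y ≤ a * wolffPotential N p R ω y + b) (x : E) :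
    wolffPotential N p R ((volume.restrict Ω).withDensity (fun y => v y ^ q) + ω) x ≤
      ENNReal.ofReal (wolffBeta p) *
        ((2 * a) ^ (q * (1 / (p - 1))) *
            wolffPotential N p R
              ((volume.restrict Ω).withDensity (fun y => wolffPotential N p R ω y ^ q)) x +
          (2 * b) ^ (q * (1 / (p - 1))) * wolffPotential N p R volume 0 +
          wolffPotential N p R ω x) := by
  set W := wolffPotential N p R ω
  have hc₁ : (2 * a) ^ q ≠ ⊤ := ENNReal.rpow_ne_top_of_nonneg hq (by finiteness)
  have hc₂ : (2 * b) ^ q ≠ ⊤ := ENNReal.rpow_ne_top_of_nonneg hq (by finiteness)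
  have hdensity : (fun y => v y ^ q) ≤ᵐ[volume.restrict Ω]
      (2 * a) ^ q • (fun y => W y ^ q) + fun _ => (2 * b) ^ q := by
    filter_upwards [hv] with y hy
    calc v y ^ q ≤ (a * W y + b) ^ q := ENNReal.rpow_le_rpow hy hq
      _ ≤ (2 * (a * W y)) ^ q + (2 * b) ^ q :=
        ENNReal.rpow_add_le_two_mul_rpow_add_two_mul_rpow hq _ _
      _ = _ := by rw [← mul_assoc, ENNReal.mul_rpow_of_nonneg _ _ hq]; rfl
  have hmeasure : (volume.restrict Ω).withDensity (fun y => v y ^ q) + ω ≤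
      (2 * a) ^ q • (volume.restrict Ω).withDensity (fun y => W y ^ q) +
        (2 * b) ^ q • volume.restrict Ω + ω := by
    gcongr
    refine (withDensity_mono hdensity).trans_eq ?_
    rw [withDensity_add_right _ measurable_const, withDensity_smul' _ _ hc₁, withDensity_const]
  calc wolffPotential N p R ((volume.restrict Ω).withDensity (fun y => v y ^ q) + ω) x
      ≤ _ := wolffPotential_mono hp.le hmeasure x
    _ ≤ _ := wolffPotential_add_add_le hp _ _ _ x
    _ ≤ _ := by
      rw [wolffPotential_smul hp.le hc₁, wolffPotential_smul hp.le hc₂, ← ENNReal.rpow_mul,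
        ← ENNReal.rpow_mul, ← wolffPotential_volume_eq x]
      gcongr
      exact wolffPotential_mono hp.le Measure.restrict_le_self x

lemma ae_mul_wolffPotential_withDensity_rpow_add_le (hp : 1 < p) {q : ℝ} (hq : 0 ≤ q) {Ω : Set E}
    {ω : Measure E} {v : E → ℝ≥0∞} {k A b : ℝ≥0∞} (hk : k ≠ ⊤) (hb : b ≠ ⊤)
    (hA : (4 * ENNReal.ofReal (wolffBeta p) * k) ^ (q * (1 / (p - 1))) * A
      ≤ 1)
    (hbsmall : k * ENNReal.ofReal (wolffBeta p) * 4 ^ (q * (1 / (p - 1))) *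
      wolffPotential N p R volume 0 * b ^ (q * (1 / (p - 1))) ≤ b)
    (hw : ∀ᵐ x ∂(volume.restrict Ω),
      wolffPotential N p R
          ((volume.restrict Ω).withDensity (fun y => wolffPotential N p R ω y ^ q)) x
        ≤ A * wolffPotential N p R ω x)
    (hv : ∀ᵐ y ∂(volume.restrict Ω), v y ≤
      2 * ENNReal.ofReal (wolffBeta p) * k * wolffPotential N p R ω y + 2 * b) :
    ∀ᵐ x ∂(volume.restrict Ω),
      k * wolffPotential N p R ((volume.restrict Ω).withDensity (fun y => v y ^ q) + ω) x + b ≤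
        2 * ENNReal.ofReal (wolffBeta p) * k * wolffPotential N p R ω x +
          2 * b := by
  set β := ENNReal.ofReal (wolffBeta p)
  set W := wolffPotential N p R ω
  set γ := 1 / (p - 1)
  have hγ : 0 ≤ γ := one_div_nonneg.2 (sub_nonneg.2 hp.le)
  have hfour : 2 * (2 * β * k) = 4 * β * k := by ring
  have hfour' : 2 * (2 * b) = 4 * b := by ring
  filter_upwards [hw] with x hx
  have hsum := wolffPotential_withDensity_rpow_add_le hp hq (by finiteness) (by finiteness) hv x
  rw [hfour, hfour', ENNReal.mul_rpow_of_nonneg 4 b (mul_nonneg hq hγ)] at hsum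
  calc k * wolffPotential N p R ((volume.restrict Ω).withDensity (fun y => v y ^ q) + ω) x + b
      ≤ k * (β * ((4 * β * k) ^ (q * γ) * (A * W x) +
          4 ^ (q * γ) * b ^ (q * γ) * wolffPotential N p R volume 0 + W x)) + b := by
        gcongr
        exact hsum.trans (by gcongr)
    _ = β * k * ((4 * β * k) ^ (q * γ) * A) * W x +
          k * β * 4 ^ (q * γ) * wolffPotential N p R volume 0 * b ^ (q * γ) +
          β * k * W x + b := by ring
    _ ≤ β * k * 1 * W x + b + β * k * W x + b := by gcongr
    _ = 2 * β * k * W x + 2 * b := by ring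

lemma ae_ofReal_le_of_iterate (hp : 1 < p) {q : ℝ} (hq : 0 ≤ q) {Ω : Set E}
    {ω : Measure E} {u : ℕ → E → ℝ} {k A b : ℝ≥0∞} (hk : k ≠ ⊤) (hb : b ≠ ⊤)
    (hA : (4 * ENNReal.ofReal (wolffBeta p) * k) ^ (q * (1 / (p - 1))) * A ≤ 1)
    (hbsmall : k * ENNReal.ofReal (wolffBeta p) * 4 ^ (q * (1 / (p - 1))) *
      wolffPotential N p R volume 0 * b ^ (q * (1 / (p - 1))) ≤ b)
    (hw : ∀ᵐ x ∂(volume.restrict Ω),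
      wolffPotential N p R
          ((volume.restrict Ω).withDensity (fun y => wolffPotential N p R ω y ^ q)) x
        ≤ A * wolffPotential N p R ω x)
    (hu₀ : ∀ m : ℕ, 1 ≤ m → ∀ᵐ x ∂(volume.restrict Ω), 0 ≤ u m x)
    (hu₁ : ∀ᵐ x ∂(volume.restrict Ω), ENNReal.ofReal (u 1 x) ≤ k * wolffPotential N p R ω x + b)
    (hu : ∀ m : ℕ, 1 ≤ m → ∀ᵐ x ∂(volume.restrict Ω),
      ENNReal.ofReal (u (m + 1) x) ≤
        k * wolffPotential N p R
          ((volume.restrict Ω).withDensity (fun y => ENNReal.ofReal (u m y ^ q)) + ω) x + b) :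
    ∀ m : ℕ, 1 ≤ m → ∀ᵐ x ∂(volume.restrict Ω),
      ENNReal.ofReal (u m x) ≤
        2 * ENNReal.ofReal (wolffBeta p) * k * wolffPotential N p R ω x + 2 * b := by
  refine Nat.le_induction ?_ fun m hm ih => ?_
  · have hβ : 1 ≤ 2 * ENNReal.ofReal (wolffBeta p) := one_le_two.trans
      (le_mul_of_one_le_right zero_le (ENNReal.one_le_ofReal.2 (le_max_left _ _)))
    filter_upwards [hu₁] with x hx
    refine hx.trans (add_le_add ?_ (le_mul_of_one_le_left zero_le one_le_two))
    gcongr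
    exact le_mul_of_one_le_left zero_le hβ
  · have hdensity : (volume.restrict Ω).withDensity (fun y => ENNReal.ofReal (u m y ^ q)) =
        (volume.restrict Ω).withDensity (fun y => ENNReal.ofReal (u m y) ^ q) :=
      withDensity_congr_ae <| by
        filter_upwards [hu₀ m hm] with y hy
        rw [ENNReal.ofReal_rpow_of_nonneg hy hq]
    filter_upwards [hu m hm,
      ae_mul_wolffPotential_withDensity_rpow_add_le hp hq hk hb hA hbsmall hw ih] with x hx hstep
    rw [hdensity] at hx
    exact hx.trans hstep

end WolffPotential

theorem power_source_iteration_general (N : ℕ) (p q K M D : ℝ)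
    (hp : 1 < p) (hq : p - 1 < q) :
    ∃ lam₀ : ℝ, 0 < lam₀ ∧ ∃ b₀ : ℝ, 0 < b₀ ∧
      ∀ Ω : Set (EuclideanSpace ℝ (Fin N)),
        IsOpen Ω → IsConnected Ω → Bornology.IsBounded Ω → Metric.diam Ω = D →
        ∀ ω : Measure (EuclideanSpace ℝ (Fin N)), IsFiniteMeasure ω → ω Ωᶜ = 0 →
          ∀ lam b : ℝ, 0 < lam → 0 ≤ b →
          (∀ᵐ x ∂(volume.restrict Ω),
            wolffPotential N p (2 * D)
                ((volume.restrict Ω).withDensity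
                  (fun y => wolffPotential N p (2 * D) ω y ^ q)) x
              ≤ ENNReal.ofReal (M * lam ^ ((q - p + 1) / (p - 1) ^ 2)) *
                  wolffPotential N p (2 * D) ω x
            ∧ wolffPotential N p (2 * D) ω x < ⊤) →
          ∀ u : ℕ → EuclideanSpace ℝ (Fin N) → ℝ,
            (∀ m : ℕ, 1 ≤ m → ∀ᵐ x ∂(volume.restrict Ω), 0 ≤ u m x) →
            (∀ᵐ x ∂(volume.restrict Ω),
              ENNReal.ofReal (u 1 x) ≤
                ENNReal.ofReal K * wolffPotential N p (2 * D) ω x + ENNReal.ofReal b) →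
            (∀ m : ℕ, 1 ≤ m → ∀ᵐ x ∂(volume.restrict Ω),
              ENNReal.ofReal (u (m + 1) x) ≤
                ENNReal.ofReal K *
                  wolffPotential N p (2 * D)
                    ((volume.restrict Ω).withDensity
                        (fun y => ENNReal.ofReal (u m y ^ q)) + ω) x
                  + ENNReal.ofReal b) →
            lam ≤ lam₀ → b ≤ b₀ →
            ∀ m : ℕ, 1 ≤ m → ∀ᵐ x ∂(volume.restrict Ω),
              ENNReal.ofReal (u m x) ≤
                ENNReal.ofReal (2 * max 1 (3 ^ ((2 - p) / (p - 1))) * K) *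
                  wolffPotential N p (2 * D) ω x + ENNReal.ofReal (2 * b) := by
  have hp₁ : 0 < p - 1 := sub_pos.2 hp
  have hq₀ : 0 ≤ q := by linarith
  have hexp : 0 < (q - p + 1) / (p - 1) ^ 2 := div_pos (by linarith) (by positivity)
  have hqγ : 1 < q * (1 / (p - 1)) := by rw [mul_one_div, one_lt_div hp₁]; exact hq
  set β := ENNReal.ofReal (wolffBeta p)
  set k := ENNReal.ofReal K
  obtain ⟨lam₀, hlam₀, hlam_small⟩ := ENNReal.exists_pos_forall_mul_ofReal_rpow_le_one
    (c := (4 * β * k) ^ (q * (1 / (p - 1))) * ENNReal.ofReal M) (by finiteness) hexp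
  obtain ⟨b₀, hb₀, hb_small⟩ := ENNReal.exists_pos_forall_mul_ofReal_rpow_le_self
    (c := k * β * 4 ^ (q * (1 / (p - 1))) * wolffPotential N p (2 * D) volume 0)
    (ENNReal.mul_ne_top (by finiteness) (wolffPotential_volume_lt_top hp 0).ne) hqγ
  refine ⟨lam₀, hlam₀, b₀, hb₀, fun Ω _ _ _ _ ω _ _ lam b hlam _ hw u hu₀ hu₁ hu hlamle hble =>
    ?_⟩
  have hA : (4 * β * k) ^ (q * (1 / (p - 1))) *
      ENNReal.ofReal (M * lam ^ ((q - p + 1) / (p - 1) ^ 2)) ≤ 1 := by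
    rw [ENNReal.ofReal_mul' (by positivity), ← ENNReal.ofReal_rpow_of_nonneg hlam.le hexp.le,
      ← mul_assoc]
    exact hlam_small lam hlamle
  rw [ENNReal.ofReal_mul (by positivity), ENNReal.ofReal_mul zero_le_two, ENNReal.ofReal_ofNat,
    ENNReal.ofReal_mul zero_le_two, ENNReal.ofReal_ofNat]
  exact ae_ofReal_le_of_iterate hp hq₀ ENNReal.ofReal_ne_top ENNReal.ofReal_ne_top hA
    (hb_small b hble) (hw.mono fun x hx => hx.1) hu₀ hu₁ hu

/-- the iteration lemma with power nonlinearity. Let `1 < p < N`, `q > p−1`,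
`β_p = max(1, 3^{(2−p)/(p−1)})`. There exist `λ₀, b₀ > 0` depending only on
`N, p, q, K, D, M` such that, for every bounded domain `Ω` of diameter `D`, every finite
nonnegative measure `ω` supported in `Ω`, every `λ > 0`, `b ≥ 0` satisfying the pointwise
inequality `W_{1,p}^{2D}[(W_{1,p}^{2D}[ω])^q dx] ≤ M λ^{(q−p+1)/(p−1)²} W_{1,p}^{2D}[ω] < ∞`
a.e. in `Ω`, and every sequence `u_m` of nonnegative functions on `Ω` with
`u₁ ≤ K W_{1,p}^{2D}[ω] + b` and `u_{m+1} ≤ K W_{1,p}^{2D}[u_m^q dx + ω] + b` a.e. in `Ω`,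
if `λ ≤ λ₀` and `b ≤ b₀`, then `u_m ≤ 2 β_p K W_{1,p}^{2D}[ω] + 2b` a.e. in `Ω` for all
`m ≥ 1`. -/
theorem power_source_iteration (N : ℕ) (p q K M D : ℝ)
    (hp : 1 < p) (hpN : p < N) (hq : p - 1 < q) (hK : 0 < K) (hM : 0 < M) :
    ∃ lam₀ : ℝ, 0 < lam₀ ∧ ∃ b₀ : ℝ, 0 < b₀ ∧
      ∀ Ω : Set (EuclideanSpace ℝ (Fin N)),
        IsOpen Ω → IsConnected Ω → Bornology.IsBounded Ω → Metric.diam Ω = D →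
        ∀ ω : Measure (EuclideanSpace ℝ (Fin N)), IsFiniteMeasure ω → ω Ωᶜ = 0 →
          ∀ lam b : ℝ, 0 < lam → 0 ≤ b →
          (∀ᵐ x ∂(volume.restrict Ω),
            wolffPotential N p (2 * D)
                ((volume.restrict Ω).withDensity
                  (fun y => wolffPotential N p (2 * D) ω y ^ q)) x
              ≤ ENNReal.ofReal (M * lam ^ ((q - p + 1) / (p - 1) ^ 2)) *
                  wolffPotential N p (2 * D) ω x
            ∧ wolffPotential N p (2 * D) ω x < ⊤) →
          ∀ u : ℕ → EuclideanSpace ℝ (Fin N) → ℝ,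
            (∀ m : ℕ, 1 ≤ m → ∀ᵐ x ∂(volume.restrict Ω), 0 ≤ u m x) →
            (∀ᵐ x ∂(volume.restrict Ω),
              ENNReal.ofReal (u 1 x) ≤
                ENNReal.ofReal K * wolffPotential N p (2 * D) ω x + ENNReal.ofReal b) →
            (∀ m : ℕ, 1 ≤ m → ∀ᵐ x ∂(volume.restrict Ω),
              ENNReal.ofReal (u (m + 1) x) ≤
                ENNReal.ofReal K *
                  wolffPotential N p (2 * D)
                    ((volume.restrict Ω).withDensity
                        (fun y => ENNReal.ofReal (u m y ^ q)) + ω) x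
                  + ENNReal.ofReal b) →
            lam ≤ lam₀ → b ≤ b₀ →
            ∀ m : ℕ, 1 ≤ m → ∀ᵐ x ∂(volume.restrict Ω),
              ENNReal.ofReal (u m x) ≤
                ENNReal.ofReal (2 * max 1 (3 ^ ((2 - p) / (p - 1))) * K) *
                  wolffPotential N p (2 * D) ω x + ENNReal.ofReal (2 * b) :=
  power_source_iteration_general N p q K M D hp hq
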